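/- arXiv:0807.4169 — 3 statements merged into one kernel-verified Lean document; each statement's English description precedes it below -/
import Mathlib

section
/- Let k ≥ 1, let w ∈ [k]* with |w| = n ≥ 2, and let ρ ∈ NC(n). Then Δ(Y_{w;ρ}) = Σ_{π ∈ NC(n), π ≤ ρ} Y_{w;π} ⊗ Y_{w;K_ρ(π)}, where K_ρ(π) is the relative Kreweras complement of π in ρ. -/
open scoped TensorProduct

noncomputable section

namespace FreeProb

attribute [local instance] Classical.propDecidable

/-! ### Non-crossing partitions of `{1,…,n}`, modelled as setoids on `Fin n` -/

/-- The partition `0_n` of `Fin n` into singletons. -/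
def botS (n : ℕ) : Setoid (Fin n) := ⟨Eq, eq_equivalence⟩

/-- The partition `1_n` of `Fin n` with a single block. -/
def topS (n : ℕ) : Setoid (Fin n) :=
  ⟨fun _ _ => True, ⟨fun _ => trivial, fun _ => trivial, fun _ _ => trivial⟩⟩

/-- A partition is non-crossing if there is no crossing `a < b < c < d` with
`a ∼ c`, `b ∼ d` lying in different blocks. -/
def IsNC {n : ℕ} (s : Setoid (Fin n)) : Prop :=
  ∀ a b c d : Fin n, a < b → b < c → c < d → s.r a c → s.r b d → s.r a b

/-- The lattice `NC(n)` of non-crossing partitions, ordered by reversed refinement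
(the order inherited from the lattice of setoids). -/
abbrev NC (n : ℕ) := {s : Setoid (Fin n) // IsNC s}

instance (n : ℕ) : Finite (Setoid (Fin n)) :=
  Finite.of_injective (fun s => s.r) (by intro s t h; cases s; cases t; cases h; rfl)

noncomputable instance (n : ℕ) : Fintype (Setoid (Fin n)) := Fintype.ofFinite _

noncomputable instance (n : ℕ) : Fintype (NC n) := Fintype.ofFinite _

/-- `0_n` as a non-crossing partition. -/
def ncBot (n : ℕ) : NC n :=
  ⟨botS n, by
    intro a b c d h1 h2 h3 hac _
    have hac' : a = c := hac
    subst hac'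
    exact absurd (h1.trans h2) (lt_irrefl _)⟩

/-- `1_n` as a non-crossing partition. -/
def ncTop (n : ℕ) : NC n := ⟨topS n, fun _ _ _ _ _ _ _ _ _ => trivial⟩

/-- The blocks of a partition, as a finset of finsets. -/
def blocks {n : ℕ} (s : Setoid (Fin n)) : Finset (Finset (Fin n)) :=
  Finset.univ.image fun a => Finset.univ.filter fun b => s.r a b

/-- The next element of the block of `b`, in increasing cyclic order. -/
def nextFun {n : ℕ} (s : Setoid (Fin n)) (b : Fin n) : Fin n :=
  let B : Finset (Fin n) := Finset.univ.filter fun a => s.r b a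
  let A : Finset (Fin n) := B.filter fun a => b < a
  if h : A.Nonempty then A.min' h
  else B.min' ⟨b, Finset.mem_filter.mpr ⟨Finset.mem_univ b, s.iseqv.refl b⟩⟩

/-- The permutation `P_π` associated to a partition `π`: its cycles are the blocks
of `π`, traversed in increasing order.  (The function `nextFun` is indeed bijective,
so the `dite` below always takes its first branch.) -/
def permOf {n : ℕ} (s : Setoid (Fin n)) : Equiv.Perm (Fin n) :=
  if h : Function.Bijective (nextFun s) then Equiv.ofBijective _ h else 1

/-- The partition of `Fin n` into the cycles (orbits) of a permutation. -/
def cycleSetoid {n : ℕ} (σ : Equiv.Perm (Fin n)) : Setoid (Fin n) :=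
  ⟨σ.SameCycle, ⟨fun x => Equiv.Perm.SameCycle.refl σ x, fun h => h.symm, fun h h' => h.trans h'⟩⟩

/-- The Kreweras complement `K(π)`, determined by `P_{K(π)} = P_π⁻¹ * P_{1_n}`. -/
def kreweras {n : ℕ} (s : Setoid (Fin n)) : Setoid (Fin n) :=
  cycleSetoid ((permOf s)⁻¹ * permOf (topS n))

/-- The relative Kreweras complement `K_t(s)`, determined by `P_{K_t(s)} = P_s⁻¹ * P_t`. -/
def relKreweras {n : ℕ} (s t : Setoid (Fin n)) : Setoid (Fin n) :=
  cycleSetoid ((permOf s)⁻¹ * permOf t)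

/-! ### Words, and the Hopf algebra `Y^(k)` -/

/-- Words over the alphabet `{1,…,k}`, encoded as pairs `⟨n, w⟩` with `w : Fin n → Fin k`. -/
abbrev WordIdx (k : ℕ) := Σ n : ℕ, Fin n → Fin k

/-- The commutative polynomial algebra `Y^(k) = ℂ[Y_w : |w| ≥ 2]`. -/
abbrev Yalg (k : ℕ) := MvPolynomial {p : WordIdx k // 2 ≤ p.1} ℂ

/-- The generator `Y_w`, with the convention `Y_w = 1` for `|w| ≤ 1`. -/
def Ygen {k : ℕ} (p : WordIdx k) : Yalg k :=
  if h : 2 ≤ p.1 then MvPolynomial.X ⟨p, h⟩ else 1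

/-- The subword `w|B` of `w` on the positions in `B` (in increasing order). -/
def subword {k n : ℕ} (w : Fin n → Fin k) (B : Finset (Fin n)) : Fin B.card → Fin k :=
  fun i => w (B.orderIsoOfFin rfl i).1

/-- The element `Y_{w;π} = ∏_{B block of π} Y_{w|B}`. -/
def Yprod {k n : ℕ} (w : Fin n → Fin k) (s : Setoid (Fin n)) : Yalg k :=
  ∏ B ∈ blocks s, Ygen ⟨B.card, subword w B⟩

/-- The comultiplication of `Y^(k)`:
`Δ(Y_w) = ∑_{π ∈ NC(n)} Y_{w;π} ⊗ Y_{w;K(π)}`. -/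
def Δk (k : ℕ) : Yalg k →ₐ[ℂ] Yalg k ⊗[ℂ] Yalg k :=
  MvPolynomial.aeval fun q : {p : WordIdx k // 2 ≤ p.1} =>
    ∑ π : NC q.1.1, Yprod q.1.2 π.1 ⊗ₜ[ℂ] Yprod q.1.2 (kreweras π.1)

/-- The counit of `Y^(k)`: `ε(Y_w) = 0` for `|w| ≥ 2`. -/
def εk (k : ℕ) : Yalg k →ₐ[ℂ] ℂ := MvPolynomial.aeval fun _ => 0

/-- The grading of `Y^(k)` in which `Y_w` is homogeneous of degree `|w| - 1`. -/
def Ycomp (k n : ℕ) : Submodule ℂ (Yalg k) :=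
  MvPolynomial.weightedHomogeneousSubmodule ℂ (fun q : {p : WordIdx k // 2 ≤ p.1} => q.1.1 - 1) n

/-! ### Convolution of linear functionals on a bialgebra -/

variable {A : Type} [CommRing A] [Algebra ℂ A]

/-- Convolution `ξη := mult ∘ (ξ ⊗ η) ∘ Δ` of two linear functionals. -/
def convF (D : A →ₐ[ℂ] A ⊗[ℂ] A) (ξ η : A →ₗ[ℂ] ℂ) : A →ₗ[ℂ] ℂ :=
  LinearMap.mul' ℂ ℂ ∘ₗ TensorProduct.map ξ η ∘ₗ D.toLinearMap

/-- Convolution powers `ξ^m`, with `ξ^0 := e` (the counit). -/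
def convPowF (D : A →ₐ[ℂ] A ⊗[ℂ] A) (e ξ : A →ₗ[ℂ] ℂ) : ℕ → (A →ₗ[ℂ] ℂ)
  | 0 => e
  | m + 1 => convF D (convPowF D e ξ m) ξ

/-- `(log η)(x) = -∑_{ℓ ≥ 1} (1/ℓ) (e - η)^ℓ (x)`, the logarithm of a functional `η`
with respect to convolution (`e` is the counit).  On each `x` the sum has only finitely
many nonzero terms, so the `tsum` below is the honest value. -/
def logFunF (D : A →ₐ[ℂ] A ⊗[ℂ] A) (e η : A →ₗ[ℂ] ℂ) (x : A) : ℂ :=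
  -∑' ℓ : ℕ, (1 / ((ℓ : ℂ) + 1)) * convPowF D e (e - η) (ℓ + 1) x

/-! ### Distributions, R-transforms, free multiplicative convolution -/

/-- A distribution (or a family of coefficients of a power series in `k` non-commuting
indeterminates), encoded by its values on all words. -/
abbrev Dist (k : ℕ) := WordIdx k → ℂ

/-- `μ ∈ G_k`: `μ(1) = 1` and `μ(X_i) = 1` for all `i`. -/
def InG {k : ℕ} (μ : Dist k) : Prop :=
  (∀ w : Fin 0 → Fin k, μ ⟨0, w⟩ = 1) ∧ (∀ w : Fin 1 → Fin k, μ ⟨1, w⟩ = 1)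

/-- `Cf_{w;π}(f) = ∏_{B block of π} Cf_{w|B}(f)`, for a coefficient family `α`. -/
def cfPart {k n : ℕ} (α : Dist k) (w : Fin n → Fin k) (s : Setoid (Fin n)) : ℂ :=
  ∏ B ∈ blocks s, α ⟨B.card, subword w B⟩

/-- `α` is (the coefficient family of) the R-transform of `μ`:
the moment–cumulant relations hold. -/
def IsRTransform {k : ℕ} (μ α : Dist k) : Prop :=
  (∀ w : Fin 0 → Fin k, α ⟨0, w⟩ = 0) ∧
  ∀ (n : ℕ) (w : Fin n → Fin k), 1 ≤ n → μ ⟨n, w⟩ = ∑ π : NC n, cfPart α w π.1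

/-- `γ` is the R-transform of the free multiplicative convolution of distributions
with R-transforms `α` and `β`:
`Cf_w(R_{μ⊠ν}) = ∑_{π ∈ NC(n)} Cf_{w;π}(R_μ) Cf_{w;K(π)}(R_ν)`. -/
def IsBoxtimes {k : ℕ} (α β γ : Dist k) : Prop :=
  ∀ (n : ℕ) (w : Fin n → Fin k), 1 ≤ n →
    γ ⟨n, w⟩ = ∑ π : NC n, cfPart α w π.1 * cfPart β w (kreweras π.1)

/-- The unit `μ_o` of `(G_k, ⊠)`: all moments equal to `1`. -/
def distUnit (k : ℕ) : Dist k := fun _ => 1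

/-- The character `χ_μ` of `Y^(k)` associated to a distribution with R-transform `α`:
`χ_μ(Y_w) = Cf_w(R_μ)`. -/
def charOf {k : ℕ} (α : Dist k) : Yalg k →ₐ[ℂ] ℂ :=
  MvPolynomial.aeval fun q => α q.1

/-- The generalized coefficient `Cf_w^(Γ)(f) = ∏_{j=1}^{ℓ} Cf_{w;K_{π_j}(π_{j-1})}(f)`
attached to a (multi-)chain `Γ = (π_0,…,π_{m+1})` in `NC(n)`. -/
def cfChain {k n : ℕ} (α : Dist k) (w : Fin n → Fin k) (m : ℕ)
    (c : Fin (m + 2) → Setoid (Fin n)) : ℂ :=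
  ∏ j : Fin (m + 1), cfPart α w (relKreweras (c j.castSucc) (c j.succ))

/-- The `i`-th marginal coefficients: the free cumulants of the `i`-th marginal `μ_i`
are `Cf_{(i,…,i)}(R_μ)`. -/
def margFam {k : ℕ} (α : Dist k) (i : Fin k) : Dist 1 := fun q => α ⟨q.1, fun _ => i⟩


/-! ### Iterated comultiplication -/

/-- The iterated tensor powers `Y^(k) ⊗ ⋯ ⊗ Y^(k)` (`m+1` factors), as objects of
`ModuleCat ℂ` so that the recursion carries its module structure. -/
def YpowM (k : ℕ) : ℕ → ModuleCat ℂ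
  | 0 => ModuleCat.of ℂ (Yalg k)
  | m + 1 => ModuleCat.of ℂ (Yalg k ⊗[ℂ] YpowM k m)

/-- The iterated comultiplication: `Δiter k m = Δ^{m+1}` in the notation of the paper
(`Δiter k 0 = id`, `Δiter k (m+1) = (id ⊗ Δ^{m+1}) ∘ Δ`). -/
def Δiter (k : ℕ) : ∀ m : ℕ, Yalg k →ₗ[ℂ] YpowM k m
  | 0 => LinearMap.id
  | m + 1 => TensorProduct.map LinearMap.id (Δiter k m) ∘ₗ (Δk k).toLinearMap

/-- The pure tensor `Y_{w;K_{π_1}(π_0)} ⊗ ⋯ ⊗ Y_{w;K_{π_{m+1}}(π_m)}` attached to a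
multi-chain `(π_0, …, π_{m+1})`. -/
def chainTensor {k n : ℕ} (w : Fin n → Fin k) :
    ∀ m : ℕ, (Fin (m + 2) → Setoid (Fin n)) → YpowM k m
  | 0, c => Yprod w (relKreweras (c 0) (c 1))
  | m + 1, c => Yprod w (relKreweras (c 0) (c 1)) ⊗ₜ[ℂ] chainTensor w m (fun i => c i.succ)


/-! ### One-variable power series tools -/

/-- The R-transform of a one-variable distribution, as a power series. -/
def Rser (α : Dist 1) : PowerSeries ℂ :=
  PowerSeries.mk fun m => if m = 0 then 0 else α ⟨m, fun _ => 0⟩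

/-- Composition `f ∘ g` of formal power series (the honest composition whenever
`g` has vanishing constant term). -/
def psComp (f g : PowerSeries ℂ) : PowerSeries ℂ :=
  PowerSeries.mk fun m =>
    ∑ j ∈ Finset.range (m + 1), PowerSeries.coeff j f * PowerSeries.coeff m (g ^ j)

/-- `S` is the S-transform of the distribution with R-transform `α`:
`S(z) = (1/z)·R^{⟨-1⟩}(z)`, i.e. `z·S(z)` is the compositional inverse of `R`. -/
def SChar (α : Dist 1) (S : PowerSeries ℂ) : Prop :=
  PowerSeries.constantCoeff S = 1 ∧
  psComp (Rser α) (PowerSeries.X * S) = PowerSeries.X ∧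
  psComp (PowerSeries.X * S) (Rser α) = PowerSeries.X

/-- The formal logarithm `log f = -∑_{ℓ≥1} (1/ℓ)(1-f)^ℓ = ∑_{ℓ≥1} ((-1)^{ℓ+1}/ℓ)(f-1)^ℓ`
of a power series (the honest logarithm whenever `f` has constant term 1). -/
def psLog {B : Type} [CommRing B] [Algebra ℂ B] (f : PowerSeries B) : PowerSeries B :=
  PowerSeries.mk fun m =>
    ∑ ℓ ∈ Finset.range (m + 1), ((-1 : ℂ) ^ (ℓ + 1) / ℓ) • PowerSeries.coeff m ((f - 1) ^ ℓ)

/-- The coefficient-wise LS-transform of a one-variable distribution, as a power series. -/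
def LSseries (α : Dist 1) : PowerSeries ℂ :=
  PowerSeries.mk fun n =>
    if 2 ≤ n then
      logFunF (Δk 1) (εk 1).toLinearMap (charOf α).toLinearMap (Ygen ⟨n, fun _ => 0⟩)
    else 0

/-! ### The Hopf algebra `Sym` of symmetric functions -/

/-- `Sym`, realized as the free commutative algebra on the complete homogeneous
symmetric functions `h_1, h_2, …`. -/
abbrev SymA := MvPolynomial {m : ℕ // 1 ≤ m} ℂ

/-- The complete homogeneous symmetric function `h_m` (with `h_0 = 1`). -/
def Hgen (m : ℕ) : SymA := if h : 1 ≤ m then MvPolynomial.X ⟨m, h⟩ else 1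

/-- The comultiplication of `Sym`: `Δ(h_n) = ∑_{i=0}^n h_i ⊗ h_{n-i}`. -/
def ΔSym : SymA →ₐ[ℂ] SymA ⊗[ℂ] SymA :=
  MvPolynomial.aeval fun q : {m : ℕ // 1 ≤ m} =>
    ∑ i ∈ Finset.range (q.1 + 1), Hgen i ⊗ₜ[ℂ] Hgen (q.1 - i)

/-- The counit of `Sym`. -/
def εSym : SymA →ₐ[ℂ] ℂ := MvPolynomial.aeval fun _ => 0

/-- The generating series `h(z) = 1 + ∑ (-1)^n h_n z^n`. -/
def hSymSeries : PowerSeries SymA :=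
  PowerSeries.mk fun m => if m = 0 then 1 else (-1 : SymA) ^ m * Hgen m

/-- The generating series `e(z) = 1 + ∑ e_n z^n = 1/h(z)`. -/
def eSymSeries : PowerSeries SymA := PowerSeries.invOfUnit hSymSeries 1

/-- The elementary symmetric function `e_m`, defined through `e(z) = 1/h(z)`. -/
def eSym (m : ℕ) : SymA := PowerSeries.coeff m eSymSeries

/-- The power sum symmetric function `p_m`, defined through
`log e(z) = ∑_{m≥1} ((-1)^{m+1}/m) p_m z^m`. -/
def pSym (m : ℕ) : SymA :=
  ((-1 : ℂ) ^ (m + 1) * m) • PowerSeries.coeff m (psLog eSymSeries)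

/-- The grading of `Sym` (`h_n` homogeneous of degree `n`). -/
def SymComp (n : ℕ) : Submodule ℂ SymA :=
  MvPolynomial.weightedHomogeneousSubmodule ℂ (fun q : {m : ℕ // 1 ≤ m} => q.1) n

/-- The symmetric function `y_n = ∑_{π ∈ NC(n-1)} ∏_{B block of π} e_{|B|}`. -/
def ySym (n : ℕ) : SymA := ∑ π : NC (n - 1), ∏ B ∈ blocks π.1, eSym B.card

/-- The homomorphism `Φ : Y^(1) → Sym`, `Φ(Y_n) = y_n`. -/
def Phi : Yalg 1 →ₐ[ℂ] SymA := MvPolynomial.aeval fun q => ySym q.1.1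

/-- The character `θ_μ` of `Sym` attached to a distribution with S-transform `S`:
`θ_μ(h_n) = (-1)^n β_n` where `S(z) = 1 + ∑ β_n z^n`. -/
def thetaOf (S : PowerSeries ℂ) : SymA →ₐ[ℂ] ℂ :=
  MvPolynomial.aeval fun q : {m : ℕ // 1 ≤ m} =>
    (-1 : ℂ) ^ q.1 * PowerSeries.coeff q.1 S

/-- Infinitesimal characters of `Sym`. -/
def IsInfCharSym (ξ : SymA →ₗ[ℂ] ℂ) : Prop :=
  ∀ u v : SymA, ξ (u * v) = ξ u * εSym v + εSym u * ξ v


/-!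
`Y_{w;ρ}` is the product of the generators `Y_{w|B}` over the blocks `B` of `ρ`, and `Δ` is
multiplicative, so `Δ(Y_{w;ρ})` is a product over the blocks of sums over `NC(|B|)`. Choosing one
non-crossing partition of every block is the same as choosing `π ∈ NC(n)` with `π ≤ ρ`
(restriction to the blocks and gluing are inverse), and both tensor factors split blockwise:
`Y_{w;π} = ∏_B Y_{w|B;π|B}`, and `K_ρ(π)|B = K(π|B)`, because `P_π` and `P_ρ` preserve `B`, on which
`P_ρ` acts as `P_{1_{|B|}}`.
-/

section Cycles

variable {m n : ℕ}

lemma cycleSetoid_le {σ : Equiv.Perm (Fin n)} {t : Setoid (Fin n)} (h : ∀ a, t a (σ a)) :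
    cycleSetoid σ ≤ t := by
  intro a b hab
  obtain ⟨i, rfl⟩ := Equiv.Perm.SameCycle.exists_nat_pow_eq hab
  clear hab
  induction i with
  | zero => exact t.refl' a
  | succ i ih => exact t.trans' ih (by rw [pow_succ', Equiv.Perm.mul_apply]; exact h _)

lemma comap_cycleSetoid {σ : Equiv.Perm (Fin n)} {τ : Equiv.Perm (Fin m)} {e : Fin m → Fin n}
    (he : Function.Injective e) (hσ : Function.Semiconj e τ σ) :
    (cycleSetoid σ).comap e = cycleSetoid τ := by
  have hpow (i : ℕ) (j : Fin m) : (σ ^ i) (e j) = e ((τ ^ i) j) := by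
    simp only [Equiv.Perm.coe_pow]
    exact ((hσ.iterate_right i) j).symm
  ext i j
  rw [Setoid.comap_rel]
  constructor
  · intro h
    obtain ⟨p, hp⟩ := Equiv.Perm.SameCycle.exists_nat_pow_eq h
    exact ⟨p, he (by rw [zpow_natCast, ← hpow, hp])⟩
  · intro h
    obtain ⟨p, hp⟩ := Equiv.Perm.SameCycle.exists_nat_pow_eq h
    exact ⟨p, by rw [zpow_natCast, hpow, hp]⟩

end Cycles

section Blocks

variable {n : ℕ} {s : Setoid (Fin n)} {B : Finset (Fin n)} {a b : Fin n}

def blockOf (s : Setoid (Fin n)) (a : Fin n) : Finset (Fin n) :=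
  Finset.univ.filter fun b => s.r a b

lemma mem_blockOf : b ∈ blockOf s a ↔ s a b := by
  simp [blockOf]

lemma blockOf_mem_blocks (s : Setoid (Fin n)) (a : Fin n) : blockOf s a ∈ blocks s :=
  Finset.mem_image_of_mem _ (Finset.mem_univ a)

lemma mem_blocks : B ∈ blocks s ↔ ∃ a, blockOf s a = B := by
  simp [blocks, blockOf]

lemma eq_blockOf_of_mem (hB : B ∈ blocks s) (ha : a ∈ B) : B = blockOf s a := by
  obtain ⟨c, rfl⟩ := mem_blocks.mp hB
  have hca : s c a := mem_blockOf.mp ha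
  ext b
  simp only [mem_blockOf]
  exact ⟨fun h => s.trans' (s.symm' hca) h, fun h => s.trans' hca h⟩

lemma mem_of_mem_blocks (hB : B ∈ blocks s) (ha : a ∈ B) (hab : s a b) : b ∈ B := by
  rw [eq_blockOf_of_mem hB ha]
  exact mem_blockOf.mpr hab

lemma rel_of_mem_blocks (hB : B ∈ blocks s) (ha : a ∈ B) (hb : b ∈ B) : s a b :=
  mem_blockOf.mp (eq_blockOf_of_mem hB ha ▸ hb)

lemma nonempty_of_mem_blocks (hB : B ∈ blocks s) : B.Nonempty := by
  obtain ⟨c, rfl⟩ := mem_blocks.mp hB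
  exact ⟨c, mem_blockOf.mpr (s.refl' c)⟩

lemma image_blockOf_comap {m : ℕ} (e : Fin m → Fin n)
    (hsat : ∀ j b, s (e j) b → b ∈ Set.range e) (j : Fin m) :
    (blockOf (s.comap e) j).image e = blockOf s (e j) := by
  ext b
  simp only [mem_blockOf, Finset.mem_image, Setoid.comap_rel]
  constructor
  · rintro ⟨i, hi, rfl⟩
    exact hi
  · intro h
    obtain ⟨i, rfl⟩ := hsat j b h
    exact ⟨i, h, rfl⟩

end Blocks

section PermOf

variable {m n : ℕ} {s : Setoid (Fin n)} {a b : Fin n}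

lemma nextFun_eq (s : Setoid (Fin n)) (b : Fin n) :
    nextFun s b =
      if h : ((blockOf s b).filter (b < ·)).Nonempty then ((blockOf s b).filter (b < ·)).min' h
      else (blockOf s b).min' ⟨b, mem_blockOf.mpr (s.refl' b)⟩ :=
  rfl

lemma rel_nextFun (s : Setoid (Fin n)) (b : Fin n) : s b (nextFun s b) := by
  rw [nextFun_eq]
  split_ifs with h
  · exact mem_blockOf.mp (Finset.mem_filter.mp (Finset.min'_mem _ h)).1
  · exact mem_blockOf.mp (Finset.min'_mem _ _)

lemma lt_nextFun_and_nextFun_le (hab : s b a) (hlt : b < a) :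
    b < nextFun s b ∧ nextFun s b ≤ a := by
  have ha : a ∈ (blockOf s b).filter (b < ·) := Finset.mem_filter.mpr ⟨mem_blockOf.mpr hab, hlt⟩
  rw [nextFun_eq, dif_pos ⟨a, ha⟩]
  exact ⟨(Finset.mem_filter.mp (Finset.min'_mem _ _)).2, Finset.min'_le _ _ ha⟩

lemma lt_nextFun_or_nextFun_le (hab : s b a) : b < nextFun s b ∨ nextFun s b ≤ a := by
  rw [nextFun_eq]
  split_ifs with h
  · exact Or.inl (Finset.mem_filter.mp (Finset.min'_mem _ h)).2
  · exact Or.inr (Finset.min'_le _ _ (mem_blockOf.mpr hab))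

lemma nextFun_injective (s : Setoid (Fin n)) : Function.Injective (nextFun s) := by
  -- A common successor `c` of `b₁ < b₂` would satisfy `b₁ < c ≤ b₂`, but the successor of `b₂`
  -- is either above `b₂` or the least element of the block.
  have hne : ∀ ⦃b₁ b₂⦄, s b₁ b₂ → b₁ < b₂ → nextFun s b₁ ≠ nextFun s b₂ := by
    intro b₁ b₂ h hlt heq
    obtain ⟨h₁, h₂⟩ := lt_nextFun_and_nextFun_le h hlt
    rcases lt_nextFun_or_nextFun_le (s.symm' h) with h₃ | h₃ <;> rw [← heq] at h₃
    · exact absurd h₂ (not_le.mpr h₃)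
    · exact absurd h₁ (not_lt.mpr h₃)
  intro b₁ b₂ heq
  have h : s b₁ b₂ := s.trans' (rel_nextFun s b₁) (heq ▸ s.symm' (rel_nextFun s b₂))
  rcases lt_trichotomy b₁ b₂ with hlt | rfl | hlt
  · exact absurd heq (hne h hlt)
  · rfl
  · exact absurd heq.symm (hne (s.symm' h) hlt)

lemma permOf_apply (s : Setoid (Fin n)) (a : Fin n) : permOf s a = nextFun s a := by
  rw [permOf, dif_pos (Finite.injective_iff_bijective.mp (nextFun_injective s))]
  rfl

lemma rel_permOf (s : Setoid (Fin n)) (a : Fin n) : s a (permOf s a) := by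
  rw [permOf_apply]
  exact rel_nextFun s a

lemma rel_permOf_inv (s : Setoid (Fin n)) (a : Fin n) : s ((permOf s)⁻¹ a) a := by
  simpa using rel_permOf s ((permOf s)⁻¹ a)

lemma semiconj_permOf_comap (e : Fin m ↪o Fin n) (hsat : ∀ j b, s (e j) b → b ∈ Set.range e) :
    Function.Semiconj e (permOf (s.comap e)) (permOf s) := by
  intro j
  have hblock := (image_blockOf_comap e hsat j).symm
  have hupper : (blockOf s (e j)).filter (e j < ·) =
      ((blockOf (s.comap e) j).filter (j < ·)).image e := by
    simp [hblock, Finset.filter_image]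
  rw [permOf_apply, permOf_apply, nextFun_eq, nextFun_eq]
  simp only [hupper]
  simp only [hblock, Finset.image_nonempty]
  split_ifs <;> exact (Finset.min'_image e.monotone _ _).symm

end PermOf

section Restrict

variable {m n : ℕ} {s t : Setoid (Fin n)} {B : Finset (Fin n)}

def restrict (s : Setoid (Fin n)) (B : Finset (Fin n)) : Setoid (Fin B.card) :=
  s.comap (B.orderEmbOfFin rfl)

lemma isNC_comap (hs : IsNC s) (e : Fin m ↪o Fin n) : IsNC (s.comap e) :=
  fun _ _ _ _ h₁ h₂ h₃ => hs _ _ _ _ (e.strictMono h₁) (e.strictMono h₂) (e.strictMono h₃)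

lemma comap_relKreweras (e : Fin m ↪o Fin n) (hst : s ≤ t)
    (hsat : ∀ j b, t (e j) b → b ∈ Set.range e) :
    (relKreweras s t).comap e = relKreweras (s.comap e) (t.comap e) := by
  have hs := semiconj_permOf_comap e fun j b h => hsat j b (hst h)
  have hs_inv : Function.Semiconj e ⇑(permOf (s.comap e))⁻¹ ⇑(permOf s)⁻¹ :=
    hs.inverses_right (Equiv.rightInverse_symm _) (Equiv.leftInverse_symm _)
  exact comap_cycleSetoid e.injective (hs_inv.comp_right (semiconj_permOf_comap e hsat))

lemma mem_range_orderEmbOfFin_of_rel (hB : B ∈ blocks t) :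
    ∀ j b, t (B.orderEmbOfFin rfl j) b → b ∈ Set.range (B.orderEmbOfFin rfl) := by
  intro j b h
  rw [Finset.range_orderEmbOfFin]
  exact mem_of_mem_blocks hB (Finset.orderEmbOfFin_mem B rfl j) h

lemma restrict_eq_topS (hB : B ∈ blocks t) : restrict t B = topS B.card := by
  ext i j
  exact iff_of_true (rel_of_mem_blocks (s := t) hB (Finset.orderEmbOfFin_mem B rfl i)
    (Finset.orderEmbOfFin_mem B rfl j)) trivial

lemma restrict_relKreweras (hst : s ≤ t) (hB : B ∈ blocks t) :
    restrict (relKreweras s t) B = kreweras (restrict s B) := by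
  rw [restrict, comap_relKreweras _ hst (mem_range_orderEmbOfFin_of_rel hB)]
  change relKreweras (restrict s B) (restrict t B) = _
  rw [restrict_eq_topS hB]
  rfl

lemma relKreweras_le (hst : s ≤ t) : relKreweras s t ≤ t :=
  cycleSetoid_le fun a => t.trans' (rel_permOf t a) (t.symm' (hst (rel_permOf_inv s _)))

end Restrict

section Factor

variable {k m n : ℕ} {s ρ : Setoid (Fin n)} {B : Finset (Fin n)}

lemma prod_blocks_of_le {M : Type*} [CommMonoid M] (hs : s ≤ ρ) (f : Finset (Fin n) → M) :
    ∏ X ∈ blocks s, f X = ∏ B ∈ blocks ρ, ∏ X ∈ (blocks s).filter (· ⊆ B), f X := by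
  have hunion : blocks s = (blocks ρ).biUnion fun B => (blocks s).filter (· ⊆ B) := by
    ext X
    simp only [Finset.mem_biUnion, Finset.mem_filter]
    refine ⟨fun hX => ?_, fun ⟨_, _, hX, _⟩ => hX⟩
    obtain ⟨a, rfl⟩ := mem_blocks.mp hX
    exact ⟨blockOf ρ a, blockOf_mem_blocks ρ a, hX,
      fun b hb => mem_blockOf.mpr (hs (mem_blockOf.mp hb))⟩
  have hdisj : (blocks ρ : Set (Finset (Fin n))).PairwiseDisjoint
      fun B => (blocks s).filter (· ⊆ B) := by
    intro B₁ hB₁ B₂ hB₂ hne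
    refine Finset.disjoint_left.mpr fun X hX₁ hX₂ => hne ?_
    obtain ⟨hX, hXB₁⟩ := Finset.mem_filter.mp hX₁
    obtain ⟨a, ha⟩ := nonempty_of_mem_blocks hX
    rw [eq_blockOf_of_mem hB₁ (hXB₁ ha),
      eq_blockOf_of_mem hB₂ ((Finset.mem_filter.mp hX₂).2 ha)]
  rw [← Finset.prod_biUnion hdisj, ← hunion]

lemma image_blocks_restrict (hs : s ≤ ρ) (hB : B ∈ blocks ρ) :
    (blocks (restrict s B)).image (Finset.image (B.orderEmbOfFin rfl)) =
      (blocks s).filter (· ⊆ B) := by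
  have hsat : ∀ j b, s (B.orderEmbOfFin rfl j) b → b ∈ Set.range (B.orderEmbOfFin rfl) :=
    fun j b h => mem_range_orderEmbOfFin_of_rel hB j b (hs h)
  ext X
  simp only [Finset.mem_image, Finset.mem_filter, mem_blocks]
  constructor
  · rintro ⟨_, ⟨j, rfl⟩, rfl⟩
    rw [restrict, image_blockOf_comap _ hsat]
    refine ⟨⟨_, rfl⟩, fun b hb => ?_⟩
    obtain ⟨i, rfl⟩ := hsat j b (mem_blockOf.mp hb)
    exact Finset.orderEmbOfFin_mem B rfl i
  · rintro ⟨⟨a, rfl⟩, hsub⟩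
    obtain ⟨j, rfl⟩ : a ∈ Set.range (B.orderEmbOfFin rfl) := by
      rw [Finset.range_orderEmbOfFin]
      exact hsub (mem_blockOf.mpr (s.refl' a))
    exact ⟨_, ⟨j, rfl⟩, image_blockOf_comap _ hsat j⟩

lemma subword_image (w : Fin n → Fin k) (e : Fin m ↪o Fin n) (A : Finset (Fin m)) :
    (⟨(A.image e).card, subword w (A.image e)⟩ : WordIdx k) = ⟨A.card, subword (w ∘ e) A⟩ := by
  have hcard : (A.image e).card = A.card := Finset.card_image_of_injective A e.injective
  refine Fin.sigma_eq_of_eq_comp_cast hcard ?_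
  have hemb : (fun i => e (A.orderEmbOfFin rfl (Fin.cast hcard i))) =
      (A.image e).orderEmbOfFin rfl :=
    Finset.orderEmbOfFin_unique rfl
      (fun i => Finset.mem_image_of_mem e (Finset.orderEmbOfFin_mem A rfl _))
      (e.strictMono.comp ((A.orderEmbOfFin rfl).strictMono.comp (Fin.cast_strictMono hcard)))
  funext i
  exact congrArg w (congrFun hemb i).symm

lemma Yprod_eq_prod_blocks (w : Fin n → Fin k) (hs : s ≤ ρ) :
    Yprod w s = ∏ B ∈ blocks ρ, Yprod (subword w B) (restrict s B) := by
  rw [Yprod, prod_blocks_of_le hs]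
  refine Finset.prod_congr rfl fun B hB => ?_
  rw [← image_blocks_restrict hs hB,
    Finset.prod_image fun _ _ _ _ h => Finset.image_injective (B.orderEmbOfFin rfl).injective h]
  exact Finset.prod_congr rfl fun A _ => congrArg Ygen (subword_image w _ A)

end Factor

section Glue

variable {n : ℕ} {s s' ρ : Setoid (Fin n)} {B : Finset (Fin n)}

lemma exists_orderEmbOfFin_eq {x : Fin n} (hx : x ∈ B) : ∃ i, B.orderEmbOfFin rfl i = x := by
  rwa [← Set.mem_range, Finset.range_orderEmbOfFin]

lemma le_of_restrict_le (hs : s ≤ ρ) (h : ∀ B ∈ blocks ρ, restrict s B ≤ restrict s' B) :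
    s ≤ s' := by
  intro x y hxy
  have hB := blockOf_mem_blocks ρ x
  have hx : x ∈ blockOf ρ x := mem_blockOf.mpr (ρ.refl' x)
  have hy : y ∈ blockOf ρ x := mem_blockOf.mpr (hs hxy)
  generalize blockOf ρ x = B at hB hx hy
  obtain ⟨i, rfl⟩ := exists_orderEmbOfFin_eq hx
  obtain ⟨j, rfl⟩ := exists_orderEmbOfFin_eq hy
  exact h B hB hxy

lemma isNC_of_restrict (hρ : IsNC ρ) (hs : s ≤ ρ) (h : ∀ B ∈ blocks ρ, IsNC (restrict s B)) :
    IsNC s := by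
  intro a b c d h₁ h₂ h₃ hac hbd
  have hB := blockOf_mem_blocks ρ a
  have ha : a ∈ blockOf ρ a := mem_blockOf.mpr (ρ.refl' a)
  have hb : b ∈ blockOf ρ a := mem_blockOf.mpr (hρ a b c d h₁ h₂ h₃ (hs hac) (hs hbd))
  have hc : c ∈ blockOf ρ a := mem_blockOf.mpr (hs hac)
  have hd : d ∈ blockOf ρ a := mem_of_mem_blocks hB hb (hs hbd)
  generalize blockOf ρ a = B at hB ha hb hc hd
  obtain ⟨i₁, rfl⟩ := exists_orderEmbOfFin_eq ha
  obtain ⟨i₂, rfl⟩ := exists_orderEmbOfFin_eq hb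
  obtain ⟨i₃, rfl⟩ := exists_orderEmbOfFin_eq hc
  obtain ⟨i₄, rfl⟩ := exists_orderEmbOfFin_eq hd
  simp only [OrderEmbedding.lt_iff_lt] at h₁ h₂ h₃
  exact h B hB i₁ i₂ i₃ i₄ h₁ h₂ h₃ hac hbd

def glue (ρ : Setoid (Fin n)) (g : ∀ B : blocks ρ, Setoid (Fin B.1.card)) : Setoid (Fin n) where
  r x y := ρ x y ∧ ∀ (B : Finset (Fin n)) (hB : B ∈ blocks ρ) (i j : Fin B.card),
    B.orderEmbOfFin rfl i = x → B.orderEmbOfFin rfl j = y → g ⟨B, hB⟩ i j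
  iseqv := by
    refine ⟨fun x => ⟨ρ.refl' x, fun B hB i j hi hj => ?_⟩,
      fun ⟨hxy, h⟩ => ⟨ρ.symm' hxy, fun B hB i j hi hj => (g ⟨B, hB⟩).symm' (h B hB j i hj hi)⟩,
      fun {x y z} ⟨hxy, h⟩ ⟨hyz, h'⟩ => ⟨ρ.trans' hxy hyz, fun B hB i l hi hl => ?_⟩⟩
    · obtain rfl := (B.orderEmbOfFin rfl).injective (hi.trans hj.symm)
      exact (g ⟨B, hB⟩).refl' i
    · have hy : y ∈ B := mem_of_mem_blocks hB (hi ▸ Finset.orderEmbOfFin_mem B rfl i) hxy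
      obtain ⟨j, hj⟩ := exists_orderEmbOfFin_eq hy
      exact (g ⟨B, hB⟩).trans' (h B hB i j hi hj) (h' B hB j l hj hl)

lemma glue_le (ρ : Setoid (Fin n)) (g : ∀ B : blocks ρ, Setoid (Fin B.1.card)) : glue ρ g ≤ ρ :=
  fun _ _ h => h.1

lemma restrict_glue (g : ∀ B : blocks ρ, Setoid (Fin B.1.card)) (hB : B ∈ blocks ρ) :
    restrict (glue ρ g) B = g ⟨B, hB⟩ := by
  ext i j
  refine ⟨fun h => h.2 B hB i j rfl rfl, fun h => ⟨?_, fun B' hB' i' j' hi hj => ?_⟩⟩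
  · exact rel_of_mem_blocks hB (Finset.orderEmbOfFin_mem B rfl i) (Finset.orderEmbOfFin_mem B rfl j)
  · obtain rfl : B' = B := (eq_blockOf_of_mem hB' (hi ▸ Finset.orderEmbOfFin_mem B' rfl i')).trans
      (eq_blockOf_of_mem hB (Finset.orderEmbOfFin_mem B rfl i)).symm
    obtain rfl := (B'.orderEmbOfFin rfl).injective hi
    obtain rfl := (B'.orderEmbOfFin rfl).injective hj
    exact h

def restrictEquiv (ρ : NC n) : {π : NC n // π ≤ ρ} ≃ ∀ B : blocks ρ.1, NC B.1.card where
  toFun π B := ⟨restrict π.1.1 B, isNC_comap π.1.2 _⟩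
  invFun g := ⟨⟨glue ρ.1 fun B => (g B).1, isNC_of_restrict ρ.2 (glue_le _ _) fun B hB =>
    (restrict_glue _ hB).symm ▸ (g ⟨B, hB⟩).2⟩, Subtype.mk_le_mk.mpr (glue_le _ _)⟩
  left_inv π := by
    refine Subtype.ext (Subtype.ext ?_)
    change glue ρ.1 (fun B => restrict π.1.1 B.1) = π.1.1
    have h (B) (hB : B ∈ blocks ρ.1) := restrict_glue (fun B => restrict π.1.1 B.1) hB
    exact le_antisymm (le_of_restrict_le (glue_le _ _) fun B hB => (h B hB).le)
      (le_of_restrict_le π.2 fun B hB => (h B hB).ge)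
  right_inv g := funext fun B => Subtype.ext (restrict_glue _ B.2)

end Glue

lemma prod_tmul_prod {R A B ι : Type*} [CommSemiring R] [CommSemiring A] [CommSemiring B]
    [Algebra R A] [Algebra R B] (s : Finset ι) (f : ι → A) (g : ι → B) :
    ∏ i ∈ s, f i ⊗ₜ[R] g i = (∏ i ∈ s, f i) ⊗ₜ[R] ∏ i ∈ s, g i := by
  classical
  induction s using Finset.induction_on with
  | empty => simp [Algebra.TensorProduct.one_def]
  | insert a s ha ih =>
    rw [Finset.prod_insert ha, Finset.prod_insert ha, Finset.prod_insert ha, ih,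
      Algebra.TensorProduct.tmul_mul_tmul]

section Comultiplication

variable {k n : ℕ}

lemma Ygen_of_le_one {p : WordIdx k} (hp : p.1 ≤ 1) : Ygen p = 1 :=
  dif_neg (by omega)

lemma Ygen_of_two_le {p : WordIdx k} (hp : 2 ≤ p.1) : Ygen p = MvPolynomial.X ⟨p, hp⟩ :=
  dif_pos hp

lemma Yprod_eq_one (hn : n ≤ 1) (w : Fin n → Fin k) (s : Setoid (Fin n)) : Yprod w s = 1 :=
  Finset.prod_eq_one fun B _ =>
    Ygen_of_le_one ((B.card_le_univ.trans_eq (Fintype.card_fin n)).trans hn)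

lemma Δk_Ygen (hn : 1 ≤ n) (w : Fin n → Fin k) :
    Δk k (Ygen ⟨n, w⟩) = ∑ π : NC n, Yprod w π.1 ⊗ₜ[ℂ] Yprod w (kreweras π.1) := by
  rcases hn.eq_or_lt with rfl | hn
  · have : Subsingleton (NC 1) := ⟨fun π π' => Subtype.ext (Setoid.ext fun a b => by
      rw [Subsingleton.elim a b]; exact iff_of_true (π.1.refl' b) (π'.1.refl' b))⟩
    rw [Fintype.sum_subsingleton _ (ncBot 1), Yprod_eq_one le_rfl, Yprod_eq_one le_rfl,
      ← Algebra.TensorProduct.one_def, Ygen_of_le_one le_rfl, map_one]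
  · rw [Ygen_of_two_le (p := ⟨n, w⟩) hn, Δk, MvPolynomial.aeval_X]

lemma Yprod_tmul_Yprod_relKreweras (w : Fin n → Fin k) {π ρ : Setoid (Fin n)} (hπ : π ≤ ρ) :
    Yprod w π ⊗ₜ[ℂ] Yprod w (relKreweras π ρ) =
      ∏ B : blocks ρ, Yprod (subword w B) (restrict π B) ⊗ₜ[ℂ]
        Yprod (subword w B) (kreweras (restrict π B)) := by
  rw [prod_tmul_prod, Yprod_eq_prod_blocks w hπ, Yprod_eq_prod_blocks w (relKreweras_le hπ),
    ← Finset.prod_coe_sort, ← Finset.prod_coe_sort (blocks ρ)]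
  exact congrArg _ (Finset.prod_congr rfl fun B _ => by rw [restrict_relKreweras hπ B.2])

end Comultiplication

theorem comul_Yprod_general (k n : ℕ) (w : Fin n → Fin k) (ρ : NC n) :
    Δk k (Yprod w ρ.1) =
      ∑ π ∈ Finset.univ.filter (fun π : NC n => π ≤ ρ),
        Yprod w π.1 ⊗ₜ[ℂ] Yprod w (relKreweras π.1 ρ.1) := by
  let F (B : blocks ρ.1) (σ : NC B.1.card) : Yalg k ⊗[ℂ] Yalg k :=
    Yprod (subword w B) σ.1 ⊗ₜ[ℂ] Yprod (subword w B) (kreweras σ.1)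
  calc Δk k (Yprod w ρ.1)
      = ∏ B : blocks ρ.1, ∑ σ, F B σ := by
        rw [Yprod, map_prod, ← Finset.prod_coe_sort]
        exact Finset.prod_congr rfl fun B _ =>
          Δk_Ygen (Finset.card_pos.mpr (nonempty_of_mem_blocks B.2)) _
    _ = ∑ g : ∀ B : blocks ρ.1, NC B.1.card, ∏ B, F B (g B) := Fintype.prod_sum F
    _ = ∑ π : {π : NC n // π ≤ ρ}, ∏ B, F B (restrictEquiv ρ π B) :=
        (Fintype.sum_equiv (restrictEquiv ρ) _ _ fun _ => rfl).symm
    _ = _ := by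
        rw [Finset.sum_subtype (p := (· ≤ ρ)) _ fun π => by simp]
        exact Fintype.sum_congr _ _ fun π => (Yprod_tmul_Yprod_relKreweras w π.2).symm

/-- Lemma 3.3.  For `w ∈ [k]*` with `|w| = n ≥ 2` and `ρ ∈ NC(n)`,
`Δ(Y_{w;ρ}) = ∑_{π ∈ NC(n), π ≤ ρ} Y_{w;π} ⊗ Y_{w;K_ρ(π)}`. -/
theorem comul_Yprod (k n : ℕ) (hk : 1 ≤ k) (hn : 2 ≤ n) (w : Fin n → Fin k) (ρ : NC n) :
    Δk k (Yprod w ρ.1) =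
      ∑ π ∈ Finset.univ.filter (fun π : NC n => π ≤ ρ),
        Yprod w π.1 ⊗ₜ[ℂ] Yprod w (relKreweras π.1 ρ.1) :=
  comul_Yprod_general k n w ρ

end FreeProb

end
end

section
/- Let k ≥ 1, let μ ∈ G_k and μ₁ ∈ G_1 be such that Cf_{(i_1,…,i_n)}(R_μ) = Cf_{(1,…,1)}(R_{μ₁}) for all n ≥ 1 and all 1 ≤ i_1,…,i_n ≤ k (i.e. R_μ(z_1,…,z_k) = R_{μ₁}(z_1+⋯+z_k); this holds when μ is the distribution of a repeated k-tuple (a,…,a) and μ₁ is the distribution of a, with φ(a) = 1). Then Cf_{(i_1,…,i_n)}(LS_μ) = Cf_{(1,…,1)}(LS_{μ₁}) for all n ≥ 2 and all indices; that is, LS_μ(z_1,…,z_k) = LS_{μ₁}(z_1+⋯+z_k). -/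
open scoped TensorProduct

noncomputable section

namespace FreeProb

attribute [local instance] Classical.propDecidable

/-! ### Convolution of linear functionals on a bialgebra -/

variable {A : Type} [CommRing A] [Algebra ℂ A]

/-! The letters of a word play no role in `Δk` and `εk` (the partitions `π`, `K(π)` and their
blocks only see positions), so the algebra map `Y^(k) → Y^(1)` sending `Y_w` to `Y_{(1,…,1)}`
preserves the comultiplication and the counit; since `Cf_w(R_μ)` depends only on `|w|`, it also
pulls `χ_{μ₁}` back to `χ_μ`.  Convolution, hence the logarithm, is natural along such maps. -/

section Naturality

variable {B : Type} [CommRing B] [Algebra ℂ B]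
  {DA : A →ₐ[ℂ] A ⊗[ℂ] A} {DB : B →ₐ[ℂ] B ⊗[ℂ] B} {T : A →ₗ[ℂ] B}

theorem convF_comp (hT : DB.toLinearMap ∘ₗ T = TensorProduct.map T T ∘ₗ DA.toLinearMap)
    (ξ η : B →ₗ[ℂ] ℂ) : convF DB ξ η ∘ₗ T = convF DA (ξ ∘ₗ T) (η ∘ₗ T) := by
  simp only [convF, LinearMap.comp_assoc, hT, TensorProduct.map_comp]

theorem convPowF_comp (hT : DB.toLinearMap ∘ₗ T = TensorProduct.map T T ∘ₗ DA.toLinearMap)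
    (e ξ : B →ₗ[ℂ] ℂ) (m : ℕ) :
    convPowF DB e ξ m ∘ₗ T = convPowF DA (e ∘ₗ T) (ξ ∘ₗ T) m := by
  induction m with
  | zero => rfl
  | succ m ih => rw [convPowF, convF_comp hT, ih, convPowF]

theorem logFunF_apply_of_comp (hT : DB.toLinearMap ∘ₗ T = TensorProduct.map T T ∘ₗ DA.toLinearMap)
    (e η : B →ₗ[ℂ] ℂ) (x : A) : logFunF DB e η (T x) = logFunF DA (e ∘ₗ T) (η ∘ₗ T) x := by
  simp only [logFunF, ← LinearMap.sub_comp, ← convPowF_comp hT, LinearMap.comp_apply]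

end Naturality

def collapseLetters (k : ℕ) : Yalg k →ₐ[ℂ] Yalg 1 :=
  MvPolynomial.aeval fun q => Ygen ⟨q.1.1, fun _ => 0⟩

theorem collapseLetters_Ygen {k : ℕ} (p : WordIdx k) :
    collapseLetters k (Ygen p) = Ygen ⟨p.1, fun _ => 0⟩ := by
  by_cases hp : 2 ≤ p.1
  · simp only [Ygen, dif_pos hp, collapseLetters, MvPolynomial.aeval_X]
  · simp only [Ygen, dif_neg hp, map_one]

theorem collapseLetters_Yprod {k n : ℕ} (w : Fin n → Fin k) (s : Setoid (Fin n)) :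
    collapseLetters k (Yprod w s) = Yprod (fun _ => 0) s := by
  rw [Yprod, map_prod]
  exact Finset.prod_congr rfl fun B _ => collapseLetters_Ygen _

theorem collapseLetters_X {k : ℕ} (q : {p : WordIdx k // 2 ≤ p.1}) :
    collapseLetters k (MvPolynomial.X q) = MvPolynomial.X ⟨⟨q.1.1, fun _ => 0⟩, q.2⟩ := by
  simpa only [Ygen, dif_pos q.2] using collapseLetters_Ygen q.1

theorem Δk_comp_collapseLetters (k : ℕ) :
    (Δk 1).toLinearMap ∘ₗ (collapseLetters k).toLinearMap =
      TensorProduct.map (collapseLetters k).toLinearMap (collapseLetters k).toLinearMap ∘ₗ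
        (Δk k).toLinearMap := by
  refine congrArg AlgHom.toLinearMap (MvPolynomial.algHom_ext fun q => ?_ :
    (Δk 1).comp (collapseLetters k) =
      (Algebra.TensorProduct.map (collapseLetters k) (collapseLetters k)).comp (Δk k))
  simp only [AlgHom.comp_apply, collapseLetters_X, Δk, MvPolynomial.aeval_X, map_sum,
    Algebra.TensorProduct.map_tmul, collapseLetters_Yprod]

theorem εk_comp_collapseLetters (k : ℕ) : (εk 1).comp (collapseLetters k) = εk k :=
  MvPolynomial.algHom_ext fun q => by
    simp only [AlgHom.comp_apply, collapseLetters_X, εk, MvPolynomial.aeval_X]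

theorem charOf_comp_collapseLetters {k : ℕ} {α : Dist k} {α₁ : Dist 1}
    (h : ∀ (n : ℕ) (w : Fin n → Fin k), 1 ≤ n → α ⟨n, w⟩ = α₁ ⟨n, fun _ => 0⟩) :
    (charOf α₁).comp (collapseLetters k) = charOf α :=
  MvPolynomial.algHom_ext fun q => by
    simp only [AlgHom.comp_apply, collapseLetters_X, charOf, MvPolynomial.aeval_X]
    exact (h q.1.1 q.1.2 (one_le_two.trans q.2)).symm

theorem LS_of_repeated_tuple_general (k : ℕ) (α : Dist k) (α₁ : Dist 1)
    (h : ∀ (n : ℕ) (w : Fin n → Fin k), 1 ≤ n → α ⟨n, w⟩ = α₁ ⟨n, fun _ => 0⟩) :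
    ∀ (n : ℕ) (w : Fin n → Fin k), 2 ≤ n →
      logFunF (Δk k) (εk k).toLinearMap (charOf α).toLinearMap (Ygen ⟨n, w⟩) =
        logFunF (Δk 1) (εk 1).toLinearMap (charOf α₁).toLinearMap
          (Ygen ⟨n, fun _ => 0⟩) := by
  intro n w _
  rw [← collapseLetters_Ygen ⟨n, w⟩, ← AlgHom.toLinearMap_apply,
    logFunF_apply_of_comp (Δk_comp_collapseLetters k), ← AlgHom.comp_toLinearMap,
    ← AlgHom.comp_toLinearMap, εk_comp_collapseLetters, charOf_comp_collapseLetters h]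

/-- Proposition 5.1.  If `μ ∈ G_k` and `μ₁ ∈ G_1` satisfy
`R_μ(z_1,…,z_k) = R_{μ₁}(z_1 + ⋯ + z_k)` (coefficientwise:
`Cf_{(i_1,…,i_n)}(R_μ) = Cf_{(1,…,1)}(R_{μ₁})` for all words), as happens when `μ` is
the distribution of a repeated `k`-tuple `(a,…,a)` and `μ₁` that of `a`, then
`LS_μ(z_1,…,z_k) = LS_{μ₁}(z_1 + ⋯ + z_k)` (coefficientwise). -/
theorem LS_of_repeated_tuple (k : ℕ) (hk : 1 ≤ k) (μ : Dist k) (μ₁ : Dist 1)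
    (α : Dist k) (α₁ : Dist 1) (hμ : InG μ) (hμ₁ : InG μ₁)
    (hα : IsRTransform μ α) (hα₁ : IsRTransform μ₁ α₁)
    (h : ∀ (n : ℕ) (w : Fin n → Fin k), 1 ≤ n → α ⟨n, w⟩ = α₁ ⟨n, fun _ => 0⟩) :
    ∀ (n : ℕ) (w : Fin n → Fin k), 2 ≤ n →
      logFunF (Δk k) (εk k).toLinearMap (charOf α).toLinearMap (Ygen ⟨n, w⟩) =
        logFunF (Δk 1) (εk 1).toLinearMap (charOf α₁).toLinearMap
          (Ygen ⟨n, fun _ => 0⟩) :=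
  LS_of_repeated_tuple_general k α α₁ h

end FreeProb

end
end

section
/- Let Sym be the Hopf algebra of symmetric functions over ℂ. (1) If ξ is an infinitesimal character of Sym and u_1, u_2 are homogeneous symmetric functions of degrees ≥ 1, then ξ(u_1 u_2) = 0. (2) If η is a character of Sym and ξ := log η, then ξ(p_n) = η(p_n) for all n ≥ 1. (3) If ξ is an infinitesimal character of Sym, then ξ(y_n) = ((−1)^n/(n−1)) ξ(p_{n−1}) for all n ≥ 2. -/
open scoped TensorProduct

noncomputable section

namespace FreeProb

attribute [local instance] Classical.propDecidable

/-! ### Convolution of linear functionals on a bialgebra -/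

variable {A : Type} [CommRing A] [Algebra ℂ A]

/-! The counit kills positive degrees, which gives (1). The power sums are primitive: the
coproduct sends `e(z)` to `e(z) ⊗ e(z)`, and the formal logarithm, characterised by
`f · (log f)' = f'`, turns products into sums. On a primitive element every convolution power
`(ε - η)^ℓ` with `ℓ ≥ 2` vanishes, which gives (2). For (3), an infinitesimal character kills
every product of two elements of the augmentation ideal, so only the one-block partition
survives in `y_n` and only the linear term of `log e(z)` survives in `p_{n-1}`. -/

section PowerSeriesLog

open PowerSeries

lemma coeff_pow_eq_zero_of_lt {R : Type*} [CommRing R] {g : PowerSeries R}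
    (hg : constantCoeff g = 0) {m ℓ : ℕ} (h : m < ℓ) : coeff m (g ^ ℓ) = 0 :=
  X_pow_dvd_iff.1 (pow_dvd_pow_of_dvd (X_dvd_iff.2 hg) ℓ) m h

lemma coeff_psLog_eq_coeff_sum {f : PowerSeries A} (hf : constantCoeff f = 1) {m N : ℕ}
    (h : m ≤ N) :
    coeff m (psLog f) =
      coeff m (∑ ℓ ∈ Finset.range (N + 1), ((-1 : ℂ) ^ (ℓ + 1) / ℓ) • (f - 1) ^ ℓ) := by
  have hg : constantCoeff (f - 1) = 0 := by simp [hf]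
  simp only [psLog, coeff_mk, map_sum, coeff_smul]
  refine Finset.sum_subset (Finset.range_subset_range.2 (by omega)) fun ℓ _ hℓ => ?_
  rw [Finset.mem_range, not_lt] at hℓ
  rw [coeff_pow_eq_zero_of_lt hg (by omega), smul_zero]

lemma derivative_sum_psLog (g : PowerSeries A) (N : ℕ) :
    d⁄dX A (∑ ℓ ∈ Finset.range (N + 2), ((-1 : ℂ) ^ (ℓ + 1) / ℓ) • g ^ ℓ) =
      (∑ j ∈ Finset.range (N + 1), (-g) ^ j) * d⁄dX A g := by
  rw [map_sum, Finset.sum_range_succ', Finset.sum_mul]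
  simp only [Derivation.map_smul_of_tower, derivative_pow]
  refine (add_eq_left.2 (by simp)).trans (Finset.sum_congr rfl fun j _ => ?_)
  have hc : ((-1 : ℂ) ^ (j + 1 + 1) / ↑(j + 1)) * (j + 1 : ℕ) = (-1) ^ j := by
    field_simp; ring
  rw [mul_assoc, ← nsmul_eq_mul, ← Nat.cast_smul_eq_nsmul ℂ, smul_smul, hc, Nat.add_sub_cancel,
    neg_pow g, mul_assoc, Algebra.smul_def, map_pow, map_neg, map_one]

lemma derivative_psLog {f : PowerSeries A} (hf : constantCoeff f = 1) :
    f * d⁄dX A (psLog f) = d⁄dX A f := by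
  suffices h : ∀ N, X ^ (N + 1) ∣ f * d⁄dX A (psLog f) - d⁄dX A f by
    ext N
    exact sub_eq_zero.1 (by rw [← map_sub]; exact X_pow_dvd_iff.1 (h N) N N.lt_succ_self)
  intro N
  set P := ∑ ℓ ∈ Finset.range (N + 2), ((-1 : ℂ) ^ (ℓ + 1) / ℓ) • (f - 1) ^ ℓ
  -- Modulo `X ^ (N + 1)`, `(psLog f)'` is the derivative of the partial sum `P`, which is `f'`
  -- times a truncated geometric series for `1 / f`.
  have hlow : X ^ (N + 1) ∣ d⁄dX A (psLog f) - d⁄dX A P := by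
    refine X_pow_dvd_iff.2 fun m hm => ?_
    rw [map_sub, coeff_derivative, coeff_derivative,
      coeff_psLog_eq_coeff_sum hf (by omega : m + 1 ≤ N + 1), sub_self]
  have htail : X ^ (N + 1) ∣ (-(f - 1)) ^ (N + 1) :=
    pow_dvd_pow_of_dvd (X_dvd_iff.2 (by simp [hf])) _
  have hgeom := mul_neg_geom_sum (-(f - 1)) (N + 1)
  rw [sub_neg_eq_add, add_sub_cancel] at hgeom
  have hP := derivative_sum_psLog (f - 1) N
  rw [map_sub, Derivation.map_one_eq_zero, sub_zero] at hP
  have key : f * d⁄dX A (psLog f) - d⁄dX A f =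
      f * (d⁄dX A (psLog f) - d⁄dX A P) - (-(f - 1)) ^ (N + 1) * d⁄dX A f := by
    rw [hP]; linear_combination (d⁄dX A f) * hgeom
  rw [key]
  exact dvd_sub (dvd_mul_of_dvd_right hlow _) (dvd_mul_of_dvd_left htail _)

lemma constantCoeff_psLog (f : PowerSeries A) : constantCoeff (psLog f) = 0 := by
  rw [← coeff_zero_eq_constantCoeff_apply, psLog, coeff_mk]
  simp

lemma psLog_mul {f g : PowerSeries A} (hf : constantCoeff f = 1) (hg : constantCoeff g = 1) :
    psLog (f * g) = psLog f + psLog g := by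
  have : IsAddTorsionFree A := .of_isTorsionFree ℂ A
  have hfg : constantCoeff (f * g) = 1 := by rw [map_mul, hf, hg, mul_one]
  refine derivative.ext ?_ (by simp only [map_add, constantCoeff_psLog, add_zero])
  refine (isUnit_iff_constantCoeff.2 (hfg ▸ isUnit_one)).mul_left_cancel ?_
  rw [derivative_psLog hfg, map_add, Derivation.leibniz, smul_eq_mul, smul_eq_mul,
    ← derivative_psLog hf, ← derivative_psLog hg]
  ring

lemma map_psLog {B : Type} [CommRing B] [Algebra ℂ B] (φ : A →ₐ[ℂ] B) (f : PowerSeries A) :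
    map (φ : A →+* B) (psLog f) = psLog (map (φ : A →+* B) f) := by
  ext m
  simp only [psLog, coeff_map, coeff_mk, map_sum]
  refine Finset.sum_congr rfl fun ℓ _ => ?_
  rw [← map_one (map (φ : A →+* B)), ← map_sub, ← map_pow, coeff_map]
  exact map_smul φ _ _

lemma psLog_one : psLog (1 : PowerSeries A) = 0 := by
  have h := psLog_mul (f := (1 : PowerSeries A)) (g := 1) (map_one _) (map_one _)
  rw [mul_one] at h
  exact left_eq_add.1 h

end PowerSeriesLog

def IsInfChar (ε : A →ₐ[ℂ] ℂ) (ξ : A →ₗ[ℂ] ℂ) : Prop :=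
  ∀ u v : A, ξ (u * v) = ξ u * ε v + ε u * ξ v

namespace IsInfChar

open PowerSeries

variable {ε : A →ₐ[ℂ] ℂ} {ξ : A →ₗ[ℂ] ℂ}

lemma map_one (hξ : IsInfChar ε ξ) : ξ 1 = 0 := by
  simpa using hξ 1 1

lemma map_mul_eq_zero (hξ : IsInfChar ε ξ) {u v : A} (hu : ε u = 0) (hv : ε v = 0) :
    ξ (u * v) = 0 := by
  rw [hξ, hu, hv, mul_zero, zero_mul, add_zero]

lemma map_prod_eq_zero (hξ : IsInfChar ε ξ) {ι : Type*} {s : Finset ι} {x : ι → A}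
    (hs : 1 < s.card) (hx : ∀ i ∈ s, ε (x i) = 0) : ξ (∏ i ∈ s, x i) = 0 := by
  obtain ⟨i, hi⟩ := Finset.card_pos.1 (by omega : 0 < s.card)
  obtain ⟨j, hj⟩ : (s.erase i).Nonempty := by
    rw [← Finset.card_pos, Finset.card_erase_of_mem hi]; omega
  rw [← Finset.mul_prod_erase s x hi]
  exact hξ.map_mul_eq_zero (hx i hi)
    (by rw [map_prod]; exact Finset.prod_eq_zero hj (hx j (Finset.mem_of_mem_erase hj)))

lemma map_coeff_pow_eq_zero (hξ : IsInfChar ε ξ) {g : PowerSeries A}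
    (hg : map (ε : A →+* ℂ) g = 0) {ℓ : ℕ} (hℓ : 2 ≤ ℓ) (m : ℕ) : ξ (coeff m (g ^ ℓ)) = 0 := by
  have hε : ∀ k i, ε (coeff i (g ^ (k + 1))) = 0 := fun k i => by
    rw [← RingHom.coe_coe ε, ← coeff_map, map_pow, hg, zero_pow k.succ_ne_zero, map_zero]
  obtain ⟨k, rfl⟩ := Nat.exists_eq_add_of_le' hℓ
  rw [pow_succ, coeff_mul, map_sum]
  exact Finset.sum_eq_zero fun p _ => hξ.map_mul_eq_zero (hε _ _) (by simpa using hε 0 p.2)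

lemma map_coeff_psLog (hξ : IsInfChar ε ξ) {f : PowerSeries A}
    (hf : map (ε : A →+* ℂ) f = 1) {m : ℕ} (hm : 1 ≤ m) :
    ξ (coeff m (psLog f)) = ξ (coeff m f) := by
  have hg : map (ε : A →+* ℂ) (f - 1) = 0 := by rw [map_sub, hf, _root_.map_one, sub_self]
  rw [psLog, coeff_mk, map_sum, Finset.sum_eq_single_of_mem 1 (Finset.mem_range.2 (by omega))]
  · rw [pow_one, map_sub, coeff_one, if_neg (by omega)]
    simp
  · intro ℓ _ hℓ
    rcases Nat.lt_or_ge ℓ 2 with h | h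
    · obtain rfl : ℓ = 0 := by omega
      simp
    · rw [map_smul, hξ.map_coeff_pow_eq_zero hg h, smul_zero]

end IsInfChar

section Convolution

variable (D : A →ₐ[ℂ] A ⊗[ℂ] A)

lemma convF_apply_one (ξ η : A →ₗ[ℂ] ℂ) : convF D ξ η 1 = ξ 1 * η 1 := by
  simp [convF, Algebra.TensorProduct.one_def]

lemma convF_apply_of_primitive (ξ η : A →ₗ[ℂ] ℂ) {x : A} (hx : D x = x ⊗ₜ 1 + 1 ⊗ₜ x) :
    convF D ξ η x = ξ x * η 1 + ξ 1 * η x := by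
  simp [convF, hx]

lemma convPowF_apply_of_primitive (e ζ : A →ₗ[ℂ] ℂ) (hζ : ζ 1 = 0) {x : A}
    (hx : D x = x ⊗ₜ 1 + 1 ⊗ₜ x) (m : ℕ) : convPowF D e ζ (m + 2) x = 0 := by
  rw [convPowF, convF_apply_of_primitive D _ _ hx, convPowF, convF_apply_one, hζ]
  simp

lemma logFunF_apply_of_primitive {e η : A →ₗ[ℂ] ℂ} (he : e 1 = 1) (hη : η 1 = 1) {x : A}
    (hx : D x = x ⊗ₜ 1 + 1 ⊗ₜ x) : logFunF D e η x = η x - e x := by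
  have hζ : (e - η) 1 = 0 := by simp [he, hη]
  rw [logFunF, tsum_eq_single 0 fun ℓ hℓ => ?_]
  · simp [convPowF, convF_apply_of_primitive D _ _ hx, hζ, he]
  · obtain ⟨m, rfl⟩ := Nat.exists_eq_succ_of_ne_zero hℓ
    rw [convPowF_apply_of_primitive D e _ hζ hx, mul_zero]

end Convolution

section SymmetricFunctions

open PowerSeries

lemma Hgen_zero : Hgen 0 = 1 := by simp [Hgen]

lemma εSym_Hgen {m : ℕ} (hm : 1 ≤ m) : εSym (Hgen m) = 0 := by
  simp [Hgen, hm, εSym]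

lemma ΔSym_Hgen (n : ℕ) :
    ΔSym (Hgen n) = ∑ i ∈ Finset.range (n + 1), Hgen i ⊗ₜ[ℂ] Hgen (n - i) := by
  rcases Nat.eq_zero_or_pos n with rfl | hn
  · simp [Hgen_zero, Algebra.TensorProduct.one_def]
  · rw [Hgen, dif_pos (Nat.one_le_iff_ne_zero.2 hn.ne'), ΔSym, MvPolynomial.aeval_X]

lemma coeff_hSymSeries (m : ℕ) : coeff m hSymSeries = ((-1 : ℂ) ^ m) • Hgen m := by
  rcases m with _ | m
  · simp [hSymSeries, Hgen_zero]
  · simp [hSymSeries, Algebra.smul_def]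

lemma hSymSeries_mul_eSymSeries : hSymSeries * eSymSeries = 1 :=
  mul_invOfUnit _ 1 (by simp [hSymSeries, ← coeff_zero_eq_constantCoeff_apply])

lemma constantCoeff_eSymSeries : constantCoeff eSymSeries = 1 := by
  simp [eSymSeries]

lemma map_hSymSeries_mul_map_eSymSeries {B : Type*} [CommRing B] (φ : SymA →+* B) :
    map φ hSymSeries * map φ eSymSeries = 1 := by
  rw [← map_mul, hSymSeries_mul_eSymSeries, map_one]

lemma map_εSym_eSymSeries : map (εSym : SymA →+* ℂ) eSymSeries = 1 := by
  have hh : map (εSym : SymA →+* ℂ) hSymSeries = 1 := by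
    ext (_ | m) <;> simp [coeff_hSymSeries, Hgen_zero, εSym_Hgen]
  simpa [hh] using map_hSymSeries_mul_map_eSymSeries (εSym : SymA →+* ℂ)

lemma εSym_eSym {m : ℕ} (hm : 1 ≤ m) : εSym (eSym m) = 0 := by
  simpa [eSym, coeff_one, Nat.one_le_iff_ne_zero.1 hm] using congr(coeff m $map_εSym_eSymSeries)

lemma εSym_pSym (m : ℕ) : εSym (pSym m) = 0 := by
  have hlog : map (εSym : SymA →+* ℂ) (psLog eSymSeries) = 0 := by
    rw [map_psLog, map_εSym_eSymSeries, psLog_one]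
  simpa [pSym] using Or.inr congr(coeff m $hlog)

lemma εSym_eq_zero_of_mem_SymComp {d : ℕ} (hd : 1 ≤ d) {u : SymA} (hu : u ∈ SymComp d) :
    εSym u = 0 := by
  rw [SymComp, MvPolynomial.mem_weightedHomogeneousSubmodule] at hu
  have h0 := hu.coeff_eq_zero 0 (by simp; omega)
  rw [← MvPolynomial.constantCoeff_eq] at h0
  rw [εSym, MvPolynomial.aeval_zero', h0, map_zero]

section Coproduct

open Algebra.TensorProduct (includeLeft includeRight)

lemma map_ΔSym_hSymSeries :
    map (ΔSym : SymA →+* SymA ⊗[ℂ] SymA) hSymSeries =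
      map (includeLeft : SymA →ₐ[ℂ] SymA ⊗[ℂ] SymA) hSymSeries *
        map (includeRight : SymA →ₐ[ℂ] SymA ⊗[ℂ] SymA) hSymSeries := by
  ext n
  rw [coeff_map, coeff_mul, Finset.Nat.sum_antidiagonal_eq_sum_range_succ_mk, coeff_hSymSeries,
    RingHom.coe_coe, map_smul, ΔSym_Hgen, Finset.smul_sum]
  refine Finset.sum_congr rfl fun i hi => ?_
  have hpow : (-1 : ℂ) ^ n = (-1) ^ i * (-1) ^ (n - i) := by
    rw [← pow_add, Nat.add_sub_cancel' (Finset.mem_range_succ_iff.1 hi)]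
  simp [coeff_hSymSeries, hpow, smul_mul_smul_comm]

lemma map_ΔSym_eSymSeries :
    map (ΔSym : SymA →+* SymA ⊗[ℂ] SymA) eSymSeries =
      map (includeLeft : SymA →ₐ[ℂ] SymA ⊗[ℂ] SymA) eSymSeries *
        map (includeRight : SymA →ₐ[ℂ] SymA ⊗[ℂ] SymA) eSymSeries := by
  refine left_inv_eq_right_inv (a := map (ΔSym : SymA →+* SymA ⊗[ℂ] SymA) hSymSeries)
    (by rw [mul_comm, map_hSymSeries_mul_map_eSymSeries]) ?_
  rw [map_ΔSym_hSymSeries, mul_mul_mul_comm, map_hSymSeries_mul_map_eSymSeries,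
    map_hSymSeries_mul_map_eSymSeries, mul_one]

lemma ΔSym_pSym (n : ℕ) : ΔSym (pSym n) = pSym n ⊗ₜ[ℂ] 1 + 1 ⊗ₜ[ℂ] pSym n := by
  have hE : ∀ φ : SymA →+* SymA ⊗[ℂ] SymA, constantCoeff (map φ eSymSeries) = 1 := fun φ => by
    rw [← coeff_zero_eq_constantCoeff_apply, coeff_map, coeff_zero_eq_constantCoeff_apply,
      constantCoeff_eSymSeries, map_one]
  have hlog := congr(coeff n $(map_psLog ΔSym eSymSeries))
  rw [map_ΔSym_eSymSeries, psLog_mul (hE _) (hE _), ← map_psLog, ← map_psLog, map_add,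
    coeff_map, coeff_map, coeff_map, RingHom.coe_coe, RingHom.coe_coe, RingHom.coe_coe] at hlog
  rw [pSym, map_smul, hlog, Algebra.TensorProduct.includeLeft_apply,
    Algebra.TensorProduct.includeRight_apply, smul_add,
    TensorProduct.smul_tmul', TensorProduct.tmul_smul]

end Coproduct

end SymmetricFunctions

section NonCrossing

lemma card_pos_of_mem_blocks {n : ℕ} {s : Setoid (Fin n)} {B : Finset (Fin n)}
    (hB : B ∈ blocks s) : 0 < B.card := by
  obtain ⟨a, -, rfl⟩ := Finset.mem_image.1 hB
  exact Finset.card_pos.2 ⟨a, Finset.mem_filter.2 ⟨Finset.mem_univ a, s.refl a⟩⟩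

lemma blocks_topS {n : ℕ} (hn : 1 ≤ n) : blocks (topS n) = {Finset.univ} := by
  have hall :
      (fun a : Fin n => Finset.univ.filter fun b => (topS n).r a b) = fun _ => Finset.univ :=
    funext fun _ => Finset.filter_true_of_mem fun _ _ => trivial
  rw [blocks, hall, Finset.image_const (Finset.univ_nonempty_iff.2 ⟨⟨0, hn⟩⟩)]

lemma eq_topS_of_card_blocks_le_one {n : ℕ} {s : Setoid (Fin n)} (h : (blocks s).card ≤ 1) :
    s = topS n := by
  refine Setoid.ext fun a b => iff_of_true ?_ trivial
  have hab : (Finset.univ.filter fun c => s.r b c) = Finset.univ.filter fun c => s.r a c :=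
    Finset.card_le_one.1 h _ (Finset.mem_image_of_mem _ (Finset.mem_univ b)) _
      (Finset.mem_image_of_mem _ (Finset.mem_univ a))
  have hb : b ∈ Finset.univ.filter fun c => s.r a c :=
    hab ▸ Finset.mem_filter.2 ⟨Finset.mem_univ b, s.refl b⟩
  exact (Finset.mem_filter.1 hb).2

end NonCrossing

namespace IsInfCharSym

variable {ξ : SymA →ₗ[ℂ] ℂ}

lemma isInfChar (hξ : IsInfCharSym ξ) : IsInfChar εSym ξ := hξ

lemma map_pSym (hξ : IsInfCharSym ξ) {m : ℕ} (hm : 1 ≤ m) :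
    ξ (pSym m) = ((-1) ^ (m + 1) * m) * ξ (eSym m) := by
  rw [pSym, map_smul, hξ.isInfChar.map_coeff_psLog map_εSym_eSymSeries hm, smul_eq_mul, eSym]

lemma map_ySym (hξ : IsInfCharSym ξ) {n : ℕ} (hn : 2 ≤ n) : ξ (ySym n) = ξ (eSym (n - 1)) := by
  rw [ySym, map_sum, Finset.sum_eq_single (ncTop (n - 1)) ?_ (by simp)]
  · rw [ncTop, blocks_topS (by omega), Finset.prod_singleton, Finset.card_univ, Fintype.card_fin]
  · intro π _ hπ
    refine hξ.isInfChar.map_prod_eq_zero ?_ fun B hB => εSym_eSym (card_pos_of_mem_blocks hB)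
    by_contra h
    exact hπ (Subtype.ext (eq_topS_of_card_blocks_le_one (not_lt.1 h)))

end IsInfCharSym

/-- Lemma 6.11.
(1) An infinitesimal character of `Sym` kills products of two homogeneous symmetric
functions of degrees `≥ 1`.
(2) If `η` is a character of `Sym` and `ξ = log η`, then `ξ(p_n) = η(p_n)` for `n ≥ 1`.
(3) If `ξ` is an infinitesimal character of `Sym`, then
`ξ(y_n) = ((-1)^n/(n-1)) ξ(p_{n-1})` for `n ≥ 2`. -/
theorem infinitesimal_characters_Sym :
    (∀ ξ : SymA →ₗ[ℂ] ℂ, IsInfCharSym ξ →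
      ∀ (d₁ d₂ : ℕ) (u₁ u₂ : SymA), 1 ≤ d₁ → 1 ≤ d₂ →
        u₁ ∈ SymComp d₁ → u₂ ∈ SymComp d₂ → ξ (u₁ * u₂) = 0) ∧
    (∀ η : SymA →ₐ[ℂ] ℂ, ∀ n : ℕ, 1 ≤ n →
      logFunF ΔSym εSym.toLinearMap η.toLinearMap (pSym n) = η (pSym n)) ∧
    (∀ ξ : SymA →ₗ[ℂ] ℂ, IsInfCharSym ξ → ∀ n : ℕ, 2 ≤ n →
      ξ (ySym n) = ((-1 : ℂ) ^ n / ((n : ℂ) - 1)) * ξ (pSym (n - 1))) := by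
  refine ⟨fun ξ hξ d₁ d₂ u₁ u₂ h₁ h₂ hu₁ hu₂ => ?_, fun η n _ => ?_, fun ξ hξ n hn => ?_⟩
  · exact hξ.isInfChar.map_mul_eq_zero (εSym_eq_zero_of_mem_SymComp h₁ hu₁)
      (εSym_eq_zero_of_mem_SymComp h₂ hu₂)
  · rw [logFunF_apply_of_primitive ΔSym (by simp) (by simp) (ΔSym_pSym n)]
    simp [εSym_pSym]
  · obtain ⟨m, rfl⟩ : ∃ m, n = m + 1 := ⟨n - 1, by omega⟩
    have hm : (m : ℂ) ≠ 0 := Nat.cast_ne_zero.2 (by omega)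
    rw [hξ.map_ySym hn, hξ.map_pSym (by omega), Nat.add_sub_cancel]
    have hsq : (-1 : ℂ) ^ (m + 1) * (-1) ^ (m + 1) = 1 := by rw [← mul_pow]; norm_num
    push_cast
    rw [add_sub_cancel_right, div_mul_eq_mul_div, eq_div_iff hm]
    linear_combination (-(m * ξ (eSym m))) * hsq

end FreeProb

end
end
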